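/- arXiv:1510.08714 — 2 statements merged into one kernel-verified Lean document; each statement's English description precedes it below -/
import Mathlib

section
/- Let F be a linearly ordered field, A a magnitude of F, a ∈ F, and suppose the coset α = a + A is zeroless, i.e. 0 ∉ a + A. Then a ≠ 0 and for every x ∈ A and every natural number n, n·|x| ≤ |a| (equivalently, every element of a⁻¹ • A is infinitesimal). -/
open Pointwise

/-- A *magnitude* of a linearly ordered field `F` is an order-convex additive subgroup of `F`,
given as a set: it contains `0`, is closed under addition and negation, and is order-convex. -/
def IsMagnitude {F : Type*} [Field F] [LinearOrder F] [IsStrictOrderedRing F] (A : Set F) : Prop :=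
  (0 : F) ∈ A ∧ (∀ x ∈ A, ∀ y ∈ A, x + y ∈ A) ∧ (∀ x ∈ A, -x ∈ A) ∧
    (∀ x ∈ A, ∀ y ∈ A, ∀ z : F, x ≤ z → z ≤ y → z ∈ A)

/-- Order relation on subsets of `F`: `S ≤ T` iff every element of `S` is below some element of `T`. -/
def SetLE {F : Type*} [Field F] [LinearOrder F] [IsStrictOrderedRing F] (S T : Set F) : Prop :=
  ∀ x ∈ S, ∃ y ∈ T, x ≤ y

/-! Since `A` is a convex subgroup, an element `y ∉ A` dominates every `x ∈ A` in absolute value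
(otherwise `y ∈ [-|x|, |x|] ⊆ A`). Zerolessness of `a + A` means `-a ∉ A`, and `A` is closed under
`x ↦ n * x`, so `n * |x| = |n * x| < |-a| = |a|`. -/

theorem neg_notMem_of_zero_notMem_singleton_add {G : Type*} [AddGroup G] {A : Set G} {a : G}
    (h : (0 : G) ∉ ({a} + A)) : -a ∉ A :=
  fun ha => h ⟨a, rfl, -a, ha, add_neg_cancel a⟩

namespace IsMagnitude

variable {F : Type*} [Field F] [LinearOrder F] [IsStrictOrderedRing F] {A : Set F} {x y : F}

def toAddSubgroup (hA : IsMagnitude A) : AddSubgroup F where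
  carrier := A
  zero_mem' := hA.1
  add_mem' hx hy := hA.2.1 _ hx _ hy
  neg_mem' hx := hA.2.2.1 _ hx

theorem natCast_mul_mem (hA : IsMagnitude A) (hx : x ∈ A) (n : ℕ) : (n : F) * x ∈ A :=
  nsmul_eq_mul n x ▸ hA.toAddSubgroup.nsmul_mem (x := x) hx n

theorem mem_of_abs_le_abs (hA : IsMagnitude A) (hx : x ∈ A) (hyx : |y| ≤ |x|) : y ∈ A := by
  have habs : |x| ∈ A := abs_mem_iff (H := hA.toAddSubgroup) (x := x) |>.mpr hx
  exact hA.2.2.2 _ (hA.2.2.1 _ habs) _ habs y (neg_le_of_abs_le hyx) (le_of_abs_le hyx)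

theorem abs_lt_abs_of_mem_of_notMem (hA : IsMagnitude A) (hx : x ∈ A) (hy : y ∉ A) :
    |x| < |y| :=
  lt_of_not_ge fun hyx => hy (hA.mem_of_abs_le_abs hx hyx)

end IsMagnitude

theorem zeroless_coset_infinitesimal_ratio {F : Type*} [Field F] [LinearOrder F] [IsStrictOrderedRing F]
    (A : Set F) (hA : IsMagnitude A) (a : F) (hzl : (0 : F) ∉ ({a} + A)) :
    a ≠ 0 ∧ ∀ x ∈ A, ∀ n : ℕ, (n : F) * |x| ≤ |a| := by
  have hna : -a ∉ A := neg_notMem_of_zero_notMem_singleton_add hzl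
  refine ⟨fun ha => hna (by simpa [ha] using hA.1), fun x hx n => ?_⟩
  have hlt := hA.abs_lt_abs_of_mem_of_notMem (hA.natCast_mul_mem hx n) hna
  rw [abs_mul, Nat.abs_cast, abs_neg] at hlt
  exact hlt.le
end

section
/- Let F be a linearly ordered field, A a magnitude of F, a ∈ F, and suppose the coset α = a + A is zeroless (0 ∉ a + A). Then the set U = {1} + a⁻¹ • A is multiplicatively idempotent: U * U = U, where * is the Minkowski product of sets. -/
open Pointwise

/-
The zeroless coset `a + A` forces `-a ∉ A`, so by convexity every `x ∈ A` satisfies `|x| < |a|`.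
Hence `|a⁻¹ x| < 1`, and `a⁻¹ x y ∈ A` for all `x, y ∈ A`. Since
`(1 + a⁻¹ x)(1 + a⁻¹ y) = 1 + a⁻¹ (x + y + a⁻¹ x y)`, the set `U = 1 + a⁻¹ A` is closed under
multiplication, and it contains `1`, so `U * U = U`.
-/

namespace IsMagnitude

variable {F : Type*} [Field F] [LinearOrder F] [IsStrictOrderedRing F] {A : Set F}

theorem zero_mem (hA : IsMagnitude A) : (0 : F) ∈ A :=
  hA.1

theorem add_mem (hA : IsMagnitude A) {x y : F} (hx : x ∈ A) (hy : y ∈ A) : x + y ∈ A :=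
  hA.2.1 x hx y hy

theorem neg_mem (hA : IsMagnitude A) {x : F} (hx : x ∈ A) : -x ∈ A :=
  hA.2.2.1 x hx

theorem abs_mem (hA : IsMagnitude A) {x : F} (hx : x ∈ A) : |x| ∈ A := by
  rcases abs_choice x with h | h <;> rw [h]
  · exact hx
  · exact hA.neg_mem hx

theorem mem_of_abs_le (hA : IsMagnitude A) {y z : F} (hy : y ∈ A) (hzy : |z| ≤ |y|) : z ∈ A :=
  have hy' := hA.abs_mem hy
  hA.2.2.2 _ (hA.neg_mem hy') _ hy' z (neg_le_of_abs_le hzy) (le_of_abs_le hzy)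

theorem abs_lt_abs_of_notMem (hA : IsMagnitude A) {x b : F} (hx : x ∈ A) (hb : b ∉ A) :
    |x| < |b| :=
  lt_of_not_ge fun h => hb (hA.mem_of_abs_le hx h)

theorem mul_mem_of_abs_le_one (hA : IsMagnitude A) {c y : F} (hc : |c| ≤ 1) (hy : y ∈ A) :
    c * y ∈ A :=
  hA.mem_of_abs_le hy (by rw [abs_mul]; exact mul_le_of_le_one_left (abs_nonneg y) hc)

theorem abs_lt_of_zero_notMem_singleton_add (hA : IsMagnitude A) {a x : F}
    (hzl : (0 : F) ∉ {a} + A) (hx : x ∈ A) : |x| < |a| := by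
  have hna : -a ∉ A := fun h => hzl ⟨a, rfl, -a, h, add_neg_cancel a⟩
  simpa using hA.abs_lt_abs_of_notMem hx hna

theorem inv_mul_mul_mem (hA : IsMagnitude A) {a x y : F} (hzl : (0 : F) ∉ {a} + A)
    (hx : x ∈ A) (hy : y ∈ A) : a⁻¹ * x * y ∈ A := by
  have hxa := hA.abs_lt_of_zero_notMem_singleton_add hzl hx
  have hc : |a⁻¹ * x| ≤ 1 := by
    rw [abs_mul, abs_inv]
    exact inv_mul_le_one_of_le₀ hxa.le (abs_nonneg x |>.trans hxa.le)
  exact hA.mul_mem_of_abs_le_one hc hy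

end IsMagnitude

theorem unity_idempotent {F : Type*} [Field F] [LinearOrder F] [IsStrictOrderedRing F]
    (A : Set F) (hA : IsMagnitude A) (a : F) (hzl : (0 : F) ∉ ({a} + A)) :
    ({1} + a⁻¹ • A) * ({1} + a⁻¹ • A) = {1} + a⁻¹ • A := by
  have one_mem : (1 : F) ∈ {1} + a⁻¹ • A :=
    ⟨1, rfl, 0, ⟨0, hA.zero_mem, smul_zero _⟩, add_zero 1⟩
  refine (Set.mul_subset_iff.2 ?_).antisymm (Set.subset_mul_left _ one_mem)
  rintro _ ⟨_, rfl, _, ⟨x, hx, rfl⟩, rfl⟩ _ ⟨_, rfl, _, ⟨y, hy, rfl⟩, rfl⟩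
  have hxy : x + y + a⁻¹ * x * y ∈ A :=
    hA.add_mem (hA.add_mem hx hy) (hA.inv_mul_mul_mem hzl hx hy)
  refine ⟨1, rfl, _, ⟨_, hxy, rfl⟩, ?_⟩
  simp only [smul_eq_mul]
  ring
end
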